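/- Let G be a finitely generated group. Then G is RE^∀-flat as a group if and only if the word problem of G is recursively enumerable, i.e. for a surjection π : A* → G from the free monoid on a finite generating set A, the language π⁻¹(1) is recursively enumerable (equivalently, G is recursively presented). -/

import Mathlib

/-!  Common framework: classes of languages over finite alphabets, `C^∀`- and
`C^∃`-subsets of finitely generated monoids and groups, closure properties
(cone, full semi-AFL), and `C^•`-flatness.  -/

/-- A class of languages: for each finite alphabet `Fin n`, a collection of languages over it. -/
abbrev LangClass : Type := ∀ n : ℕ, Set (Set (List (Fin n)))

/-- `π` is a surjective monoid homomorphism from the free monoid on `Fin n`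
(words, under concatenation) onto `M`; i.e. it presents `M` as a monoid generated
by the finite set `Fin n`. -/
structure FreeHomOnto {n : ℕ} (M : Type) [Monoid M] (π : List (Fin n) → M) : Prop where
  map_nil : π [] = 1
  map_append : ∀ u v : List (Fin n), π (u ++ v) = π u * π v
  surjective : Function.Surjective π

/-- `X ⊆ M` is a `C^∀`-subset of `M` w.r.t. the generating map `π`:
the full preimage `π⁻¹(X)` is a language of the class `C`. -/
def CForall (C : LangClass) {n : ℕ} {M : Type} [Monoid M]
    (π : List (Fin n) → M) (X : Set M) : Prop :=
  {w : List (Fin n) | π w ∈ X} ∈ C n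

/-- `X ⊆ M` is a `C^∃`-subset of `M` w.r.t. the generating map `π`:
some language of the class `C` is mapped onto `X` by `π`. -/
def CExists (C : LangClass) {n : ℕ} {M : Type} [Monoid M]
    (π : List (Fin n) → M) (X : Set M) : Prop :=
  ∃ L ∈ C n, π '' L = X

/-- Closure under inverse images of homomorphisms of free monoids on finite alphabets.
Such a homomorphism is determined by its values `f i` on letters, sending `w` to `w.flatMap f`. -/
def ClosedUnderInvHom (C : LangClass) : Prop :=
  ∀ (m n : ℕ) (f : Fin m → List (Fin n)), ∀ L ∈ C n,
    {w : List (Fin m) | w.flatMap f ∈ L} ∈ C m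

/-- Closure under images of homomorphisms of free monoids on finite alphabets. -/
def ClosedUnderHom (C : LangClass) : Prop :=
  ∀ (m n : ℕ) (f : Fin m → List (Fin n)), ∀ L ∈ C m,
    (fun w : List (Fin m) => w.flatMap f) '' L ∈ C n

/-- A language over `Fin n` is regular if it is accepted by a DFA with finitely many states. -/
def IsRegularLang {n : ℕ} (L : Set (List (Fin n))) : Prop :=
  ∃ (σ : Type) (_ : Fintype σ) (A : DFA (Fin n) σ), ∀ w : List (Fin n), w ∈ A.accepts ↔ w ∈ L

/-- Closure under intersection with regular languages. -/
def ClosedUnderInterReg (C : LangClass) : Prop :=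
  ∀ (n : ℕ), ∀ L ∈ C n, ∀ R : Set (List (Fin n)), IsRegularLang R → L ∩ R ∈ C n

/-- Closure under (binary) union. -/
def ClosedUnderUnion (C : LangClass) : Prop :=
  ∀ (n : ℕ), ∀ L₁ ∈ C n, ∀ L₂ ∈ C n, L₁ ∪ L₂ ∈ C n

/-- A cone: a class of languages closed under homomorphisms, inverse homomorphisms,
and intersection with regular languages. -/
def IsCone (C : LangClass) : Prop :=
  ClosedUnderHom C ∧ ClosedUnderInvHom C ∧ ClosedUnderInterReg C

/-- A full semi-AFL: a cone closed under union. -/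
def IsFullSemiAFL (C : LangClass) : Prop :=
  IsCone C ∧ ClosedUnderUnion C

/-- `G` is `C^∀`-flat as a group: for every finitely generated subgroup `H ≤ G`
(presented by a finite monoid generating map `ρ`), a subset of `H` is a `C^∀`-subset
of `G` iff it is a `C^∀`-subset of `H`; i.e. `C^∀(G | H) = C^∀(H)`. -/
def GroupCForallFlat (C : LangClass) (G : Type) [Group G] : Prop :=
  ∀ (H : Subgroup G) (n k : ℕ) (π : List (Fin n) → G) (ρ : List (Fin k) → ↥H),
    FreeHomOnto G π → FreeHomOnto (↥H) ρ →
      ∀ X : Set G, X ⊆ (H : Set G) →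
        (CForall C π X ↔ CForall C ρ (Subtype.val ⁻¹' X))

/-- `G` is `C^∃`-flat as a group: for every finitely generated subgroup `H ≤ G`,
a subset of `H` is a `C^∃`-subset of `G` iff it is a `C^∃`-subset of `H`;
i.e. `C^∃(G | H) = C^∃(H)`. -/
def GroupCExistsFlat (C : LangClass) (G : Type) [Group G] : Prop :=
  ∀ (H : Subgroup G) (n k : ℕ) (π : List (Fin n) → G) (ρ : List (Fin k) → ↥H),
    FreeHomOnto G π → FreeHomOnto (↥H) ρ →
      ∀ X : Set G, X ⊆ (H : Set G) →
        (CExists C π X ↔ CExists C ρ (Subtype.val ⁻¹' X))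

/-- `M` is `C^∀`-flat as a monoid: for every finitely generated submonoid `N ≤ M`,
a subset of `N` is a `C^∀`-subset of `M` iff it is a `C^∀`-subset of `N`;
i.e. `C^∀(M | N) = C^∀(N)`. -/
def MonoidCForallFlat (C : LangClass) (M : Type) [Monoid M] : Prop :=
  ∀ (N : Submonoid M) (n k : ℕ) (π : List (Fin n) → M) (ρ : List (Fin k) → ↥N),
    FreeHomOnto M π → FreeHomOnto (↥N) ρ →
      ∀ X : Set M, X ⊆ (N : Set M) →
        (CForall C π X ↔ CForall C ρ (Subtype.val ⁻¹' X))

/-- `M` is `C^∃`-flat as a monoid: for every finitely generated submonoid `N ≤ M`,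
a subset of `N` is a `C^∃`-subset of `M` iff it is a `C^∃`-subset of `N`;
i.e. `C^∃(M | N) = C^∃(N)`. -/
def MonoidCExistsFlat (C : LangClass) (M : Type) [Monoid M] : Prop :=
  ∀ (N : Submonoid M) (n k : ℕ) (π : List (Fin n) → M) (ρ : List (Fin k) → ↥N),
    FreeHomOnto M π → FreeHomOnto (↥N) ρ →
      ∀ X : Set M, X ⊆ (N : Set M) →
        (CExists C π X ↔ CExists C ρ (Subtype.val ⁻¹' X))
/-- The class `RE` of recursively enumerable languages over finite alphabets. -/
def REClass : LangClass := fun n => {L | REPred (fun w : List (Fin n) => w ∈ L)}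

/-!
If the word problem is r.e., membership in `X ⊆ H` can be semi-decided in `G` by guessing: a word
`w` over the generators of `G` lies in `π⁻¹(X)` iff some word `v` over the generators of `H` has
`ρ v ∈ X` and `w⁻¹ v = 1` in `G`. The inclusion `RE^∀(G | H) ⊆ RE^∀(H)` holds in every group,
since `RE` is closed under inverse homomorphisms. Conversely, flatness applied to the trivial
subgroup, over whose generators every language is the preimage of `{1}`, makes `π⁻¹(1)` r.e.
-/

open Encodable Nat.Partrec

section REPred

variable {α β : Type*} [Primcodable α] [Primcodable β]

theorem REPred.comp {p : β → Prop} (hp : REPred p) {f : α → β} (hf : Computable f) :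
    REPred fun a => p (f a) :=
  Partrec.comp hp hf

theorem REPred.true : REPred fun _ : α => True :=
  (Partrec.const' (Part.some ())).of_eq fun _ =>
    (Part.assert_pos (f := fun _ => Part.some ()) trivial).symm

theorem REPred.and {p q : α → Prop} (hp : REPred p) (hq : REPred q) :
    REPred fun a => p a ∧ q a := by
  have h : Partrec fun a =>
      (Part.assert (p a) fun _ => Part.some ()).bind
        fun _ => Part.assert (q a) fun _ => Part.some () :=
    Partrec.bind hp (Partrec.comp hq Computable.fst)
  refine h.dom_re.of_eq fun a => ?_
  simp [Part.dom_iff_mem, Part.mem_bind_iff, Part.mem_assert_iff]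

theorem REPred.exists_evaln {p : α → Prop} (hp : REPred p) :
    ∃ c : Code, ∀ a, p a ↔ ∃ k y, y ∈ Code.evaln k c (encode a) := by
  obtain ⟨c, hc⟩ := Code.exists_code.1 hp
  refine ⟨c, fun a => ?_⟩
  calc p a ↔ ∃ y, y ∈ c.eval (encode a) := by simp [hc, encodek]
    _ ↔ _ := by simp only [Code.evaln_complete]; exact exists_comm

/-- Dovetailing: the witness `b` and the number of steps after which the code for `p` halts on
`(a, b)` are searched for together, as the two halves of one paired natural number. -/
theorem REPred.exists {p : α × β → Prop} (hp : REPred p) : REPred fun a => ∃ b, p (a, b) := by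
  obtain ⟨c, hc⟩ := hp.exists_evaln
  let F : α → ℕ → Option Unit := fun a N =>
    (decode (α := β) N.unpair.1).bind fun b =>
      (Code.evaln N.unpair.2 c (encode (a, b))).map fun _ => ()
  have hF : Primrec₂ F :=
    Primrec.option_bind (Primrec.decode.comp (Primrec.fst.comp (Primrec.unpair.comp Primrec.snd)))
      (Primrec.option_map
        (Code.primrec_evaln.comp
          (((Primrec.snd.comp (Primrec.unpair.comp (Primrec.snd.comp Primrec.fst))).pair
            (Primrec.const c)).pair
            (Primrec.encode.comp ((Primrec.fst.comp Primrec.fst).pair Primrec.snd))))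
        (Primrec.const ()))
  refine (Partrec.rfindOpt hF.to_comp).dom_re.of_eq fun a => ?_
  simp only [Nat.rfindOpt_dom, hc, F, Option.mem_def, Option.bind_eq_some_iff,
    Option.map_eq_some_iff]
  constructor
  · rintro ⟨N, -, b, -, y, hy, -⟩
    exact ⟨b, N.unpair.2, y, hy⟩
  · rintro ⟨b, k, y, hy⟩
    exact ⟨Nat.pair (encode b) k, (), b, by simp, y, by simpa using hy, trivial⟩

end REPred

theorem computable_flatMap {m k : ℕ} (f : Fin m → List (Fin k)) :
    Computable fun w : List (Fin m) => w.flatMap f :=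
  (Primrec.list_flatMap Primrec.id ((Primrec.dom_finite f).comp Primrec.snd).to₂).to_comp

theorem reClass_closedUnderInvHom : ClosedUnderInvHom REClass :=
  fun _ _ f _ hL => REPred.comp hL (computable_flatMap f)

namespace FreeHomOnto

variable {M N : Type} [Monoid M] [Monoid N] {n k : ℕ} {π : List (Fin n) → M}
  {ρ : List (Fin k) → N}

theorem map_cons (hπ : FreeHomOnto M π) (a : Fin n) (w : List (Fin n)) :
    π (a :: w) = π [a] * π w :=
  hπ.map_append [a] w

theorem exists_flatMap_lift (hπ : FreeHomOnto M π) (hρ : FreeHomOnto N ρ) (φ : N →* M) :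
    ∃ f : Fin k → List (Fin n), ∀ v, φ (ρ v) = π (v.flatMap f) := by
  choose f hf using fun b => hπ.surjective (φ (ρ [b]))
  refine ⟨f, fun v => ?_⟩
  induction v with
  | nil => simp [hρ.map_nil, hπ.map_nil]
  | cons b v ih => rw [hρ.map_cons, map_mul, ih, ← hf, List.flatMap_cons, hπ.map_append]

theorem exists_flatMap_inv {G : Type} [Group G] {π : List (Fin n) → G} (hπ : FreeHomOnto G π) :
    ∃ f : Fin n → List (Fin n), ∀ w, π (w.reverse.flatMap f) = (π w)⁻¹ := by
  choose f hf using fun a => hπ.surjective (π [a])⁻¹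
  refine ⟨f, fun w => ?_⟩
  induction w with
  | nil => simp [hπ.map_nil]
  | cons a w ih =>
    rw [List.reverse_cons, List.flatMap_append, hπ.map_append, ih, hπ.map_cons]
    simp [hf, mul_inv_rev]

end FreeHomOnto

theorem CForall.preimage {C : LangClass} (hC : ClosedUnderInvHom C) {M N : Type} [Monoid M]
    [Monoid N] {n k : ℕ} {π : List (Fin n) → M} {ρ : List (Fin k) → N} (hπ : FreeHomOnto M π)
    (hρ : FreeHomOnto N ρ) (φ : N →* M) {X : Set M} (hX : CForall C π X) :
    CForall C ρ (φ ⁻¹' X) := by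
  obtain ⟨f, hf⟩ := hπ.exists_flatMap_lift hρ φ
  have := hC k n f _ hX
  simpa only [CForall, Set.mem_preimage, Set.mem_ofPred_eq, hf] using this

section Group

variable {G : Type} [Group G] {n : ℕ} {π : List (Fin n) → G}

theorem FreeHomOnto.rePred_map_eq_map (hπ : FreeHomOnto G π) (hwp : REPred fun w => π w = 1) :
    REPred fun x : List (Fin n) × List (Fin n) => π x.1 = π x.2 := by
  obtain ⟨f, hf⟩ := hπ.exists_flatMap_inv
  have hcomp : Computable fun x : List (Fin n) × List (Fin n) => x.1.reverse.flatMap f ++ x.2 :=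
    Computable.list_append.comp
      ((computable_flatMap f).comp (Computable.list_reverse.comp Computable.fst)) Computable.snd
  refine (hwp.comp hcomp).of_eq fun x => ?_
  rw [hπ.map_append, hf, inv_mul_eq_one]

theorem cForall_re_of_subgroup (hπ : FreeHomOnto G π) (hwp : REPred fun w => π w = 1)
    {H : Subgroup G} {k : ℕ} {ρ : List (Fin k) → H} (hρ : FreeHomOnto H ρ) {X : Set G}
    (hX : X ⊆ H) (hXH : CForall REClass ρ (Subtype.val ⁻¹' X)) : CForall REClass π X := by
  obtain ⟨f, hf⟩ := hπ.exists_flatMap_lift hρ H.subtype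
  have hsearch : REPred fun x : List (Fin n) × List (Fin k) =>
      π x.1 = π (x.2.flatMap f) ∧ (ρ x.2 : G) ∈ X :=
    ((hπ.rePred_map_eq_map hwp).comp
      (Computable.fst.pair ((computable_flatMap f).comp Computable.snd))).and
      (REPred.comp hXH Computable.snd)
  refine hsearch.exists.of_eq fun w => ⟨?_, fun hw => ?_⟩
  · rintro ⟨v, hwv, hv⟩
    change π w ∈ X
    rwa [hwv, ← hf]
  · obtain ⟨v, hv⟩ := hρ.surjective ⟨π w, hX hw⟩
    have hv' : (ρ v : G) = π w := congrArg Subtype.val hv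
    exact ⟨v, hv'.symm.trans (hf v), hv' ▸ hw⟩

theorem GroupCForallFlat.rePred_eq_one (hflat : GroupCForallFlat REClass G)
    (hπ : FreeHomOnto G π) : REPred fun w => π w = 1 := by
  have hρ : FreeHomOnto (⊥ : Subgroup G) (fun _ : List (Fin 0) => 1) :=
    ⟨rfl, fun _ _ => (one_mul 1).symm, fun _ => ⟨[], Subsingleton.elim _ _⟩⟩
  refine (hflat ⊥ n 0 π _ hπ hρ {1} (by simp)).2 ?_
  exact REPred.true.of_eq fun _ => by simp

end Group

/-- A finitely generated group `G` is `RE^∀`-flat as a group iff the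
word problem of `G` is recursively enumerable, i.e. `π⁻¹(1)` is recursively enumerable
(equivalently, `G` is recursively presented). -/
theorem stmt19 {G : Type} [Group G] {n : ℕ}
    (π : List (Fin n) → G) (hπ : FreeHomOnto G π) :
    GroupCForallFlat REClass G ↔ REPred (fun w : List (Fin n) => π w = 1) := by
  refine ⟨fun hflat => hflat.rePred_eq_one hπ, fun hwp H n' k π' ρ hπ' hρ X hX => ?_⟩
  have hwp' : REPred fun w => π' w = 1 :=
    CForall.preimage (X := {1}) reClass_closedUnderInvHom hπ hπ' (MonoidHom.id G) hwp
  exact ⟨CForall.preimage reClass_closedUnderInvHom hπ' hρ H.subtype,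
    cForall_re_of_subgroup hπ' hwp' hρ hX⟩
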